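/- arXiv:2006.02281 — 3 statements merged into one kernel-verified Lean document; each statement's English description precedes it below -/
import Mathlib

section
/- (Theorem 3.1) Let N, M ∈ ℕ with N, M ≥ 1, let L ≥ 1, and for each ℓ = 1,…,L let G^ℓ : ℝ^N → ℝ^M be continuous with ∫_{ℝ^N} |G^ℓ(Z)|² dμ_pr(Z) < ∞, and let Σ^ℓ be an M×M symmetric positive-definite real matrix. For data {Y^ℓ}_{ℓ=1}^L ⊂ ℝ^M let μ_post({Y^ℓ}) be the posterior measure, i.e. the probability measure with dμ_post/dμ_pr(Z) = exp(−Σ_{ℓ=1}^L Φ^ℓ(Z; Y^ℓ)) / ∫ exp(−Σ_{ℓ=1}^L Φ^ℓ(Z'; Y^ℓ)) dμ_pr(Z'). Then for every r > 0 there exists a constant C = C(r) > 0 such that for all data families {Y₁^ℓ}_{ℓ=1}^L and {Y₂^ℓ}_{ℓ=1}^L with max_{ℓ=1,…,L} max(|Y₁^ℓ|, |Y₂^ℓ|) < r, the corresponding posterior measures μ_post¹ and μ_post² satisfy d_Hell(μ_post¹, μ_post²) ≤ C Σ_{ℓ=1}^L |Y₁^ℓ − Y₂^ℓ|. -/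
open MeasureTheory Real

/-- The squared Euclidean norm of a vector in `ℝ^k`. -/
noncomputable def euclNormSq {k : ℕ} (v : Fin k → ℝ) : ℝ := ∑ i, (v i) ^ 2

/-- The Euclidean norm of a vector in `ℝ^k`. -/
noncomputable def euclNorm {k : ℕ} (v : Fin k → ℝ) : ℝ := Real.sqrt (∑ i, (v i) ^ 2)

/-- The Hellinger distance between two measures given by their densities `f`, `g`
with respect to a reference measure `μ₀`:
`d_Hell = sqrt( ½ ∫ (√f − √g)² dμ₀ )`. -/
noncomputable def hellingerDist {X : Type*} [MeasurableSpace X]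
    (μ₀ : Measure X) (f g : X → ℝ) : ℝ :=
  Real.sqrt ((1 / 2) * ∫ x, (Real.sqrt (f x) - Real.sqrt (g x)) ^ 2 ∂μ₀)


/-!
The posterior density is the Gibbs density `exp (-Φ_Y) / ∫ exp (-Φ_Y) dμ_pr` of the total misfit
`Φ_Y = ∑ ℓ Φ^ℓ(·; Y^ℓ)`. For data of size at most `r`, and with `‖Σ⁻¹‖` the spectral norm,
`Φ_Y ≤ V := ∑ ℓ ‖(Σ^ℓ)⁻¹‖ / 2 * (r + |G^ℓ|)²`, so every normalising constant is at least
`∫ exp (-V) dμ_pr > 0`; and `|Φ_{Y₁} - Φ_{Y₂}| ≤ W * ∑ ℓ |Y₁^ℓ - Y₂^ℓ|` with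
`W := ∑ ℓ ‖(Σ^ℓ)⁻¹‖ * (r + |G^ℓ|)`, which lies in `L²(μ_pr)` because each `G^ℓ` does.
As `exp (-·)` is `1`-Lipschitz on `[0, ∞)`, the squared difference of the square roots of the two
densities is then bounded by `W²` and by the squared difference of the normalising constants, both
times `(∑ ℓ |Y₁^ℓ - Y₂^ℓ|)²`.
-/

open scoped Matrix Matrix.Norms.L2Operator

section EuclideanNorm

variable {k : ℕ}

lemma euclNorm_eq_norm (v : Fin k → ℝ) : euclNorm v = ‖WithLp.toLp 2 v‖ := by
  simp [euclNorm, EuclideanSpace.norm_eq]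

lemma euclNorm_nonneg (v : Fin k → ℝ) : 0 ≤ euclNorm v := sqrt_nonneg _

lemma euclNorm_sq (v : Fin k → ℝ) : euclNorm v ^ 2 = euclNormSq v :=
  sq_sqrt (Finset.sum_nonneg fun _ _ => sq_nonneg _)

lemma euclNorm_sub_le (u v : Fin k → ℝ) : euclNorm (u - v) ≤ euclNorm u + euclNorm v := by
  simpa [euclNorm_eq_norm] using norm_sub_le (WithLp.toLp 2 u) (WithLp.toLp 2 v)

@[fun_prop]
lemma continuous_euclNorm : Continuous (euclNorm : (Fin k → ℝ) → ℝ) := by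
  unfold euclNorm; fun_prop

@[fun_prop]
lemma continuous_euclNormSq : Continuous (euclNormSq : (Fin k → ℝ) → ℝ) := by
  unfold euclNormSq; fun_prop

lemma abs_dotProduct_mulVec_le (B : Matrix (Fin k) (Fin k) ℝ) (u w : Fin k → ℝ) :
    |u ⬝ᵥ B *ᵥ w| ≤ ‖B‖ * euclNorm u * euclNorm w := by
  have hBw : ‖WithLp.toLp 2 (B *ᵥ w)‖ ≤ ‖B‖ * euclNorm w := by
    simpa [euclNorm_eq_norm] using B.l2_opNorm_mulVec (WithLp.toLp 2 w)
  calc |u ⬝ᵥ B *ᵥ w| = |inner ℝ (WithLp.toLp 2 u) (WithLp.toLp 2 (B *ᵥ w))| := by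
        rw [EuclideanSpace.inner_toLp_toLp, dotProduct_comm]; rfl
    _ ≤ euclNorm u * ‖WithLp.toLp 2 (B *ᵥ w)‖ := by
        rw [euclNorm_eq_norm]; exact abs_real_inner_le_norm _ _
    _ ≤ ‖B‖ * euclNorm u * euclNorm w := by
        nlinarith [euclNorm_nonneg u]

end EuclideanNorm

section Misfit

variable {k : ℕ}

noncomputable def misfit (B : Matrix (Fin k) (Fin k) ℝ) (y g : Fin k → ℝ) : ℝ :=
  1 / 2 * ((y - g) ⬝ᵥ B *ᵥ (y - g))

variable {B : Matrix (Fin k) (Fin k) ℝ} {y y₁ y₂ g : Fin k → ℝ} {r : ℝ}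

lemma misfit_nonneg (hB : B.PosSemidef) (y g : Fin k → ℝ) : 0 ≤ misfit B y g :=
  mul_nonneg (by norm_num) (by simpa using hB.re_dotProduct_nonneg (y - g))

lemma continuous_misfit (B : Matrix (Fin k) (Fin k) ℝ) (y : Fin k → ℝ) :
    Continuous (misfit B y) := by
  unfold misfit; fun_prop

lemma euclNorm_sub_le_of_le (hy : euclNorm y ≤ r) : euclNorm (y - g) ≤ r + euclNorm g :=
  (euclNorm_sub_le y g).trans (by linarith)

lemma misfit_le (hy : euclNorm y ≤ r) : misfit B y g ≤ ‖B‖ / 2 * (r + euclNorm g) ^ 2 := by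
  have h := (le_abs_self _).trans (abs_dotProduct_mulVec_le B (y - g) (y - g))
  have hyg := euclNorm_sub_le_of_le (g := g) hy
  have := euclNorm_nonneg (y - g)
  unfold misfit
  nlinarith [norm_nonneg B, mul_le_mul hyg hyg this (this.trans hyg)]

lemma abs_misfit_sub_misfit_le (hy₁ : euclNorm y₁ ≤ r) (hy₂ : euclNorm y₂ ≤ r) :
    |misfit B y₁ g - misfit B y₂ g| ≤ ‖B‖ * (r + euclNorm g) * euclNorm (y₁ - y₂) := by
  have hpolar : misfit B y₁ g - misfit B y₂ g =
      1 / 2 * ((y₁ - y₂) ⬝ᵥ B *ᵥ (y₁ - g) + (y₂ - g) ⬝ᵥ B *ᵥ (y₁ - y₂)) := by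
    simp only [misfit, sub_dotProduct, dotProduct_sub, Matrix.mulVec_sub]
    ring
  have h₁ := abs_dotProduct_mulVec_le B (y₁ - y₂) (y₁ - g)
  have h₂ := abs_dotProduct_mulVec_le B (y₂ - g) (y₁ - y₂)
  have hv₁ := euclNorm_sub_le_of_le (g := g) hy₁
  have hv₂ := euclNorm_sub_le_of_le (g := g) hy₂
  have hd := euclNorm_nonneg (y₁ - y₂)
  rw [hpolar, abs_mul, abs_of_pos (by norm_num : (0 : ℝ) < 1 / 2)]
  refine (mul_le_mul_of_nonneg_left (abs_add_le _ _) (by norm_num)).trans ?_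
  nlinarith [norm_nonneg B, mul_le_mul_of_nonneg_left hv₁ (mul_nonneg (norm_nonneg B) hd),
    mul_le_mul_of_nonneg_left hv₂ (mul_nonneg (norm_nonneg B) hd)]

end Misfit

section DataMisfit

variable {X : Type*} {L M : ℕ} (B : Fin L → Matrix (Fin M) (Fin M) ℝ) (G : Fin L → X → Fin M → ℝ)

noncomputable def dataMisfit (Y : Fin L → Fin M → ℝ) (x : X) : ℝ :=
  ∑ ℓ, misfit (B ℓ) (Y ℓ) (G ℓ x)

variable {B G} {Y Y₁ Y₂ : Fin L → Fin M → ℝ} {r : ℝ}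

lemma dataMisfit_nonneg (hB : ∀ ℓ, (B ℓ).PosSemidef) (Y : Fin L → Fin M → ℝ) (x : X) :
    0 ≤ dataMisfit B G Y x :=
  Finset.sum_nonneg fun ℓ _ => misfit_nonneg (hB ℓ) _ _

lemma continuous_dataMisfit [TopologicalSpace X] (hG : ∀ ℓ, Continuous (G ℓ))
    (Y : Fin L → Fin M → ℝ) : Continuous (dataMisfit B G Y) :=
  continuous_finsetSum _ fun ℓ _ => (continuous_misfit _ _).comp (hG ℓ)

lemma dataMisfit_le (hY : ∀ ℓ, euclNorm (Y ℓ) ≤ r) (x : X) :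
    dataMisfit B G Y x ≤ ∑ ℓ, ‖B ℓ‖ / 2 * (r + euclNorm (G ℓ x)) ^ 2 :=
  Finset.sum_le_sum fun ℓ _ => misfit_le (hY ℓ)

lemma abs_dataMisfit_sub_dataMisfit_le (hY₁ : ∀ ℓ, euclNorm (Y₁ ℓ) ≤ r)
    (hY₂ : ∀ ℓ, euclNorm (Y₂ ℓ) ≤ r) (x : X) :
    |dataMisfit B G Y₁ x - dataMisfit B G Y₂ x| ≤
      (∑ ℓ, euclNorm (Y₁ ℓ - Y₂ ℓ)) * ∑ ℓ, ‖B ℓ‖ * (r + euclNorm (G ℓ x)) := by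
  calc |dataMisfit B G Y₁ x - dataMisfit B G Y₂ x|
      ≤ ∑ ℓ, |misfit (B ℓ) (Y₁ ℓ) (G ℓ x) - misfit (B ℓ) (Y₂ ℓ) (G ℓ x)| := by
        rw [dataMisfit, dataMisfit, ← Finset.sum_sub_distrib]
        exact Finset.abs_sum_le_sum_abs _ _
    _ ≤ ∑ ℓ, euclNorm (Y₁ ℓ - Y₂ ℓ) * (‖B ℓ‖ * (r + euclNorm (G ℓ x))) :=
        Finset.sum_le_sum fun ℓ _ => (abs_misfit_sub_misfit_le (hY₁ ℓ) (hY₂ ℓ)).trans_eq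
          (mul_comm _ _)
    _ ≤ (∑ ℓ, euclNorm (Y₁ ℓ - Y₂ ℓ)) * ∑ ℓ, ‖B ℓ‖ * (r + euclNorm (G ℓ x)) := by
        rw [Finset.sum_mul]
        refine Finset.sum_le_sum fun ℓ _ => mul_le_mul_of_nonneg_left
          (Finset.single_le_sum (f := fun i => ‖B i‖ * (r + euclNorm (G i x)))
            (fun i _ => mul_nonneg (norm_nonneg _) ?_) (Finset.mem_univ ℓ))
          (euclNorm_nonneg _)
        linarith [euclNorm_nonneg (Y₁ i), hY₁ i, euclNorm_nonneg (G i x)]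

end DataMisfit

lemma abs_exp_neg_sub_exp_neg_le {a b : ℝ} (ha : 0 ≤ a) (hb : 0 ≤ b) :
    |exp (-a) - exp (-b)| ≤ |a - b| := by
  wlog hab : a ≤ b generalizing a b
  · rw [abs_sub_comm, abs_sub_comm a]; exact this hb ha (le_of_not_ge hab)
  have hexp : exp (-b) = exp (-a) * exp (-(b - a)) := by rw [← exp_add]; ring_nf
  have h1 : 1 - exp (-(b - a)) ≤ b - a := by linarith [add_one_le_exp (-(b - a))]
  have h2 : exp (-(b - a)) ≤ 1 := exp_le_one_iff.mpr (by linarith)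
  have h3 : exp (-a) ≤ 1 := exp_le_one_iff.mpr (by linarith)
  rw [abs_of_nonneg (by nlinarith [exp_pos (-a)]), abs_of_nonpos (by linarith), hexp]
  nlinarith [exp_pos (-a)]

lemma sq_inv_sub_inv_le {s t d : ℝ} (hd : 0 < d) (hs : d ≤ s) (ht : d ≤ t) :
    (s⁻¹ - t⁻¹) ^ 2 ≤ (s ^ 2 - t ^ 2) ^ 2 / (4 * d ^ 6) := by
  have hs0 : 0 < s := hd.trans_le hs
  have ht0 : 0 < t := hd.trans_le ht
  have hden : 4 * d ^ 6 ≤ (s * t) ^ 2 * (s + t) ^ 2 := by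
    calc 4 * d ^ 6 = (d * d) ^ 2 * (d + d) ^ 2 := by ring
      _ ≤ (s * t) ^ 2 * (s + t) ^ 2 := by gcongr
  calc (s⁻¹ - t⁻¹) ^ 2 = (s ^ 2 - t ^ 2) ^ 2 / ((s * t) ^ 2 * (s + t) ^ 2) := by
        field_simp; ring
    _ ≤ (s ^ 2 - t ^ 2) ^ 2 / (4 * d ^ 6) := by gcongr

lemma sq_sqrt_exp_neg_div_sub_le {a b I₁ I₂ δ : ℝ} (ha : 0 ≤ a) (hb : 0 ≤ b) (hδ : 0 < δ)
    (hI₁ : δ ≤ I₁) (hI₂ : δ ≤ I₂) :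
    (√(exp (-a) / I₁) - √(exp (-b) / I₂)) ^ 2 ≤
      (a - b) ^ 2 / (2 * δ) + exp (-b) * (I₁ - I₂) ^ 2 / (2 * δ ^ 3) := by
  set p := exp (-a / 2)
  set q := exp (-b / 2)
  set s := (√I₁)⁻¹
  set t := (√I₂)⁻¹
  have hsplit : √(exp (-a) / I₁) - √(exp (-b) / I₂) = s * (p - q) + q * (s - t) := by
    rw [sqrt_div' _ (hδ.le.trans hI₁), sqrt_div' _ (hδ.le.trans hI₂), ← exp_half, ← exp_half]
    ring
  have hs : s ^ 2 ≤ 1 / δ := by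
    rw [inv_pow, sq_sqrt (hδ.le.trans hI₁), one_div]; exact inv_anti₀ hδ hI₁
  have hpq : (p - q) ^ 2 ≤ (a - b) ^ 2 / 4 := by
    have h := abs_exp_neg_sub_exp_neg_le (a := a / 2) (b := b / 2) (by positivity) (by positivity)
    rw [← neg_div, ← neg_div] at h
    calc (p - q) ^ 2 ≤ (a / 2 - b / 2) ^ 2 := sq_le_sq.mpr h
      _ = (a - b) ^ 2 / 4 := by ring
  have hq : q ^ 2 = exp (-b) := by rw [← exp_nat_mul]; ring_nf
  have hst : (s - t) ^ 2 ≤ (I₁ - I₂) ^ 2 / (4 * δ ^ 3) := by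
    have h := sq_inv_sub_inv_le (sqrt_pos.mpr hδ) (sqrt_le_sqrt hI₁) (sqrt_le_sqrt hI₂)
    rwa [sq_sqrt (hδ.le.trans hI₁), sq_sqrt (hδ.le.trans hI₂),
      show √δ ^ 6 = δ ^ 3 by rw [show 6 = 2 * 3 by rfl, pow_mul, sq_sqrt hδ.le]] at h
  rw [hsplit]
  calc (s * (p - q) + q * (s - t)) ^ 2 ≤ 2 * s ^ 2 * (p - q) ^ 2 + 2 * q ^ 2 * (s - t) ^ 2 := by
        nlinarith [sq_nonneg (s * (p - q) - q * (s - t))]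
    _ ≤ 2 * (1 / δ) * ((a - b) ^ 2 / 4) + 2 * exp (-b) * ((I₁ - I₂) ^ 2 / (4 * δ ^ 3)) := by
        rw [hq]; gcongr
    _ = (a - b) ^ 2 / (2 * δ) + exp (-b) * (I₁ - I₂) ^ 2 / (2 * δ ^ 3) := by
        field_simp; ring

section GibbsMeasure

variable {X : Type*} [MeasurableSpace X] {μ : Measure X}

noncomputable def gibbsDensity (μ : Measure X) (φ : X → ℝ) (x : X) : ℝ :=
  exp (-φ x) / ∫ x', exp (-φ x') ∂μ

lemma integrable_exp_neg [IsFiniteMeasure μ] {φ : X → ℝ} (hφ : AEStronglyMeasurable φ μ)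
    (h0 : ∀ x, 0 ≤ φ x) : Integrable (fun x => exp (-φ x)) μ :=
  .of_bound (continuous_exp.comp_aestronglyMeasurable hφ.neg) 1 <| ae_of_all _ fun x => by
    rw [norm_of_nonneg (exp_pos _).le]; exact exp_le_one_iff.mpr (by linarith [h0 x])

variable [IsFiniteMeasure μ] {φ₁ φ₂ W : X → ℝ} {T δ : ℝ}

theorem hellingerDist_gibbsDensity_le (hφ₁ : AEStronglyMeasurable φ₁ μ)
    (hφ₂ : AEStronglyMeasurable φ₂ μ) (h₁ : ∀ x, 0 ≤ φ₁ x) (h₂ : ∀ x, 0 ≤ φ₂ x)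
    (hW : MemLp W 2 μ) (hT : 0 ≤ T) (hφW : ∀ x, |φ₁ x - φ₂ x| ≤ T * W x) (hδ : 0 < δ)
    (hI₁ : δ ≤ ∫ x, exp (-φ₁ x) ∂μ) (hI₂ : δ ≤ ∫ x, exp (-φ₂ x) ∂μ) :
    hellingerDist μ (gibbsDensity μ φ₁) (gibbsDensity μ φ₂) ≤
      √((∫ x, W x ^ 2 ∂μ) / (4 * δ) + μ.real Set.univ * (∫ x, W x ∂μ) ^ 2 / (4 * δ ^ 3)) * T := by
  set I₁ := ∫ x, exp (-φ₁ x) ∂μ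
  set I₂ := ∫ x, exp (-φ₂ x) ∂μ
  have hint₁ := integrable_exp_neg hφ₁ h₁
  have hint₂ := integrable_exp_neg hφ₂ h₂
  have hI : |I₁ - I₂| ≤ T * ∫ x, W x ∂μ :=
    calc |I₁ - I₂| = |∫ x, (exp (-φ₁ x) - exp (-φ₂ x)) ∂μ| := by rw [integral_sub hint₁ hint₂]
      _ ≤ ∫ x, |exp (-φ₁ x) - exp (-φ₂ x)| ∂μ := abs_integral_le_integral_abs
      _ ≤ ∫ x, T * W x ∂μ :=
        integral_mono_of_nonneg (ae_of_all _ fun _ => abs_nonneg _)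
          ((hW.integrable one_le_two).const_mul T)
          (ae_of_all _ fun x => (abs_exp_neg_sub_exp_neg_le (h₁ x) (h₂ x)).trans (hφW x))
      _ = T * ∫ x, W x ∂μ := integral_const_mul _ _
  have hpointwise : ∀ x, (√(gibbsDensity μ φ₁ x) - √(gibbsDensity μ φ₂ x)) ^ 2 ≤
      T ^ 2 / (2 * δ) * W x ^ 2 + (T * ∫ x, W x ∂μ) ^ 2 / (2 * δ ^ 3) * exp (-φ₂ x) := by
    intro x
    refine (sq_sqrt_exp_neg_div_sub_le (h₁ x) (h₂ x) hδ hI₁ hI₂).trans ?_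
    have hφ := sq_le_sq.mpr ((hφW x).trans (le_abs_self _))
    have hI' := sq_le_sq.mpr (hI.trans (le_abs_self _))
    calc (φ₁ x - φ₂ x) ^ 2 / (2 * δ) + exp (-φ₂ x) * (I₁ - I₂) ^ 2 / (2 * δ ^ 3)
        ≤ (T * W x) ^ 2 / (2 * δ) + exp (-φ₂ x) * (T * ∫ x, W x ∂μ) ^ 2 / (2 * δ ^ 3) := by
          gcongr
      _ = _ := by ring
  have hmass : I₂ ≤ μ.real Set.univ := by
    simpa using integral_mono hint₂ (integrable_const 1)
      fun x => exp_le_one_iff.mpr (by linarith [h₂ x])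
  have hsq : ∫ x, (√(gibbsDensity μ φ₁ x) - √(gibbsDensity μ φ₂ x)) ^ 2 ∂μ ≤
      2 * ((∫ x, W x ^ 2 ∂μ) / (4 * δ) + μ.real Set.univ * (∫ x, W x ∂μ) ^ 2 / (4 * δ ^ 3)) * T ^ 2 :=
    calc _ ≤ ∫ x, (T ^ 2 / (2 * δ) * W x ^ 2 +
            (T * ∫ x, W x ∂μ) ^ 2 / (2 * δ ^ 3) * exp (-φ₂ x)) ∂μ :=
          integral_mono_of_nonneg (ae_of_all _ fun _ => sq_nonneg _)
            ((hW.integrable_sq.const_mul _).add (hint₂.const_mul _)) (ae_of_all _ hpointwise)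
      _ = T ^ 2 / (2 * δ) * ∫ x, W x ^ 2 ∂μ + (T * ∫ x, W x ∂μ) ^ 2 / (2 * δ ^ 3) * I₂ := by
          rw [integral_add (hW.integrable_sq.const_mul _) (hint₂.const_mul _),
            integral_const_mul, integral_const_mul]
      _ ≤ T ^ 2 / (2 * δ) * ∫ x, W x ^ 2 ∂μ +
            (T * ∫ x, W x ∂μ) ^ 2 / (2 * δ ^ 3) * μ.real Set.univ := by gcongr
      _ = _ := by field_simp; ring
  calc hellingerDist μ (gibbsDensity μ φ₁) (gibbsDensity μ φ₂)
      ≤ √(((∫ x, W x ^ 2 ∂μ) / (4 * δ) + μ.real Set.univ * (∫ x, W x ∂μ) ^ 2 / (4 * δ ^ 3)) *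
          T ^ 2) := sqrt_le_sqrt (by linarith)
    _ = _ := by rw [sqrt_mul' _ (sq_nonneg T), sqrt_sq hT]

end GibbsMeasure

lemma memLp_two_euclNorm {X : Type*} [MeasurableSpace X] {μ : Measure X} {k : ℕ}
    {f : X → Fin k → ℝ} (hf : AEStronglyMeasurable f μ)
    (hf2 : Integrable (fun x => euclNormSq (f x)) μ) : MemLp (fun x => euclNorm (f x)) 2 μ :=
  (memLp_two_iff_integrable_sq (continuous_euclNorm.comp_aestronglyMeasurable hf)).mpr <| by
    simpa only [euclNorm_sq] using hf2

section GaussianPrior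

variable {N : ℕ} {σ : ℝ}

lemma integrable_exp_neg_euclNormSq_sub (m : Fin N → ℝ) (hσ : 0 < σ) :
    Integrable fun Z : Fin N → ℝ => exp (-euclNormSq (Z - m) / (2 * σ)) := by
  have hprod : ∀ Z : Fin N → ℝ, exp (-euclNormSq (Z - m) / (2 * σ)) =
      ∏ i, exp (-(2 * σ)⁻¹ * (Z i - m i) ^ 2) := by
    intro Z
    rw [← exp_sum, euclNormSq, neg_div, Finset.sum_div, ← Finset.sum_neg_distrib]
    congr 1
    refine Finset.sum_congr rfl fun i _ => ?_
    simp only [Pi.sub_apply]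
    ring
  simp only [hprod]
  exact Integrable.fintype_prod (f := fun i x => exp (-(2 * σ)⁻¹ * (x - m i) ^ 2)) fun i =>
    (integrable_exp_neg_mul_sq (by positivity)).comp_sub_right (m i)

lemma isFiniteMeasure_withDensity_gaussian (m : Fin N → ℝ) (hσ : 0 < σ) (c : ℝ) :
    IsFiniteMeasure (volume.withDensity fun Z : Fin N → ℝ =>
      ENNReal.ofReal (c * exp (-euclNormSq (Z - m) / (2 * σ)))) :=
  isFiniteMeasure_withDensity_ofReal
    ((integrable_exp_neg_euclNormSq_sub m hσ).const_mul c).hasFiniteIntegral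

end GaussianPrior

lemma neZero_withDensity_ofReal {X : Type*} [MeasurableSpace X] {μ : Measure X} [NeZero μ]
    {f : X → ℝ} (hf : Measurable f) (hpos : ∀ x, 0 < f x) :
    NeZero (μ.withDensity fun x => ENNReal.ofReal (f x)) := by
  refine ⟨fun h => ?_⟩
  rw [withDensity_eq_zero_iff hf.ennreal_ofReal.aemeasurable] at h
  obtain ⟨x, hx⟩ := h.exists
  simp only [Pi.zero_apply, ENNReal.ofReal_eq_zero] at hx
  exact (hpos x).not_ge hx

theorem posterior_lipschitz_in_data_general
    (N M L : ℕ)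
    (G : Fin L → (Fin N → ℝ) → (Fin M → ℝ)) (hG : ∀ ℓ, Continuous (G ℓ))
    (S : Fin L → Matrix (Fin M) (Fin M) ℝ) (hS : ∀ ℓ, (S ℓ).PosDef)
    (m : Fin N → ℝ) (σ : ℝ) (hσ : 0 < σ)
    (μpr : Measure (Fin N → ℝ))
    (hμpr : μpr = volume.withDensity fun Z => ENNReal.ofReal
      ((2 * Real.pi * σ) ^ (-(N : ℝ) / 2) * Real.exp (-euclNormSq (Z - m) / (2 * σ))))
    (hGL2 : ∀ ℓ, Integrable (fun Z => euclNormSq (G ℓ Z)) μpr)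
    (Φ : (Fin L → Fin M → ℝ) → Fin L → (Fin N → ℝ) → ℝ)
    (hΦ : ∀ Y ℓ Z, Φ Y ℓ Z =
      (1 / 2) * dotProduct (Y ℓ - G ℓ Z) ((S ℓ)⁻¹.mulVec (Y ℓ - G ℓ Z))) :
    ∀ r > (0 : ℝ), ∃ C > (0 : ℝ), ∀ Y₁ Y₂ : Fin L → Fin M → ℝ,
      (∀ ℓ, max (euclNorm (Y₁ ℓ)) (euclNorm (Y₂ ℓ)) < r) →
      hellingerDist μpr
          (fun Z => Real.exp (-(∑ ℓ, Φ Y₁ ℓ Z)) /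
            ∫ Z', Real.exp (-(∑ ℓ, Φ Y₁ ℓ Z')) ∂μpr)
          (fun Z => Real.exp (-(∑ ℓ, Φ Y₂ ℓ Z)) /
            ∫ Z', Real.exp (-(∑ ℓ, Φ Y₂ ℓ Z')) ∂μpr)
        ≤ C * ∑ ℓ, euclNorm (Y₁ ℓ - Y₂ ℓ) := by
  intro r _
  obtain rfl : Φ = fun Y ℓ Z => misfit (S ℓ)⁻¹ (Y ℓ) (G ℓ Z) := funext₃ hΦ
  have : IsFiniteMeasure μpr := hμpr ▸ isFiniteMeasure_withDensity_gaussian m hσ _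
  have : NeZero μpr := hμpr ▸ neZero_withDensity_ofReal (by fun_prop) fun Z => by positivity
  have hB : ∀ ℓ, ((S ℓ)⁻¹).PosSemidef := fun ℓ => (hS ℓ).inv.posSemidef
  set W : (Fin N → ℝ) → ℝ := fun Z => ∑ ℓ, ‖(S ℓ)⁻¹‖ * (r + euclNorm (G ℓ Z))
  set V : (Fin N → ℝ) → ℝ := fun Z => ∑ ℓ, ‖(S ℓ)⁻¹‖ / 2 * (r + euclNorm (G ℓ Z)) ^ 2
  have hW : MemLp W 2 μpr := memLp_finsetSum _ fun ℓ _ => ((memLp_const r).add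
    (memLp_two_euclNorm (hG ℓ).aestronglyMeasurable (hGL2 ℓ))).const_mul _
  have hV : Continuous V := by have := hG; fun_prop
  have hV0 : ∀ Z, 0 ≤ V Z := fun Z => Finset.sum_nonneg fun ℓ _ => by positivity
  have hV_int := integrable_exp_neg (μ := μpr) hV.aestronglyMeasurable hV0
  have hδ : 0 < ∫ Z, exp (-V Z) ∂μpr := integral_exp_pos hV_int
  have hnormalizer : ∀ Y, (∀ ℓ, euclNorm (Y ℓ) ≤ r) →
      ∫ Z, exp (-V Z) ∂μpr ≤ ∫ Z, exp (-dataMisfit (fun ℓ => (S ℓ)⁻¹) G Y Z) ∂μpr :=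
    fun Y hY => integral_mono hV_int (integrable_exp_neg
      (continuous_dataMisfit hG Y).aestronglyMeasurable (dataMisfit_nonneg hB Y))
      fun Z => exp_le_exp.mpr (neg_le_neg (dataMisfit_le hY Z))
  set K := √((∫ Z, W Z ^ 2 ∂μpr) / (4 * ∫ Z, exp (-V Z) ∂μpr) +
    μpr.real Set.univ * (∫ Z, W Z ∂μpr) ^ 2 / (4 * (∫ Z, exp (-V Z) ∂μpr) ^ 3))
  refine ⟨K + 1, by positivity, fun Y₁ Y₂ hY => ?_⟩
  have hY₁ : ∀ ℓ, euclNorm (Y₁ ℓ) ≤ r := fun ℓ => (le_max_left _ _).trans (hY ℓ).le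
  have hY₂ : ∀ ℓ, euclNorm (Y₂ ℓ) ≤ r := fun ℓ => (le_max_right _ _).trans (hY ℓ).le
  have hT : 0 ≤ ∑ ℓ, euclNorm (Y₁ ℓ - Y₂ ℓ) := Finset.sum_nonneg fun ℓ _ => euclNorm_nonneg _
  calc _ ≤ K * ∑ ℓ, euclNorm (Y₁ ℓ - Y₂ ℓ) :=
        hellingerDist_gibbsDensity_le (continuous_dataMisfit hG Y₁).aestronglyMeasurable
          (continuous_dataMisfit hG Y₂).aestronglyMeasurable (dataMisfit_nonneg hB Y₁)
          (dataMisfit_nonneg hB Y₂) hW hT (abs_dataMisfit_sub_dataMisfit_le hY₁ hY₂) hδ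
          (hnormalizer Y₁ hY₁) (hnormalizer Y₂ hY₂)
    _ ≤ (K + 1) * ∑ ℓ, euclNorm (Y₁ ℓ - Y₂ ℓ) := by gcongr; linarith

/-- (Theorem 3.1) The posterior measure is Lipschitz in the observation data with
respect to the Hellinger distance: for every `r > 0` there is `C = C(r) > 0` such that
for all data families bounded by `r`,
`d_Hell(μ_post¹, μ_post²) ≤ C ∑ℓ |Y₁ℓ − Y₂ℓ|`, where the posterior for data `Y` has
density `Z ↦ exp(−∑ℓ Φℓ(Z;Yℓ)) / ∫ exp(−∑ℓ Φℓ(Z';Yℓ)) dμ_pr(Z')` w.r.t. the prior. -/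
theorem posterior_lipschitz_in_data
    (N M L : ℕ) (hN : 1 ≤ N) (hM : 1 ≤ M) (hL : 1 ≤ L)
    (G : Fin L → (Fin N → ℝ) → (Fin M → ℝ)) (hG : ∀ ℓ, Continuous (G ℓ))
    (S : Fin L → Matrix (Fin M) (Fin M) ℝ) (hS : ∀ ℓ, (S ℓ).PosDef)
    (m : Fin N → ℝ) (σ : ℝ) (hσ : 0 < σ)
    (μpr : Measure (Fin N → ℝ))
    (hμpr : μpr = volume.withDensity fun Z => ENNReal.ofReal
      ((2 * Real.pi * σ) ^ (-(N : ℝ) / 2) * Real.exp (-euclNormSq (Z - m) / (2 * σ))))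
    (hGL2 : ∀ ℓ, Integrable (fun Z => euclNormSq (G ℓ Z)) μpr)
    (Φ : (Fin L → Fin M → ℝ) → Fin L → (Fin N → ℝ) → ℝ)
    (hΦ : ∀ Y ℓ Z, Φ Y ℓ Z =
      (1 / 2) * dotProduct (Y ℓ - G ℓ Z) ((S ℓ)⁻¹.mulVec (Y ℓ - G ℓ Z))) :
    ∀ r > (0 : ℝ), ∃ C > (0 : ℝ), ∀ Y₁ Y₂ : Fin L → Fin M → ℝ,
      (∀ ℓ, max (euclNorm (Y₁ ℓ)) (euclNorm (Y₂ ℓ)) < r) →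
      hellingerDist μpr
          (fun Z => Real.exp (-(∑ ℓ, Φ Y₁ ℓ Z)) /
            ∫ Z', Real.exp (-(∑ ℓ, Φ Y₁ ℓ Z')) ∂μpr)
          (fun Z => Real.exp (-(∑ ℓ, Φ Y₂ ℓ Z)) /
            ∫ Z', Real.exp (-(∑ ℓ, Φ Y₂ ℓ Z')) ∂μpr)
        ≤ C * ∑ ℓ, euclNorm (Y₁ ℓ - Y₂ ℓ) :=
  posterior_lipschitz_in_data_general N M L G hG S hS m σ hσ μpr hμpr hGL2 Φ hΦ
end

section
/- Let (X, 𝒜, μ₀) be a probability space, and let Φ₁, Φ₂ : X → [0, ∞) be measurable with C₁ = ∫_X e^{−Φ₁} dμ₀ > 0 and C₂ = ∫_X e^{−Φ₂} dμ₀ > 0. Let μ₁ and μ₂ be the probability measures with dμ_i/dμ₀ = e^{−Φ_i}/C_i, i = 1, 2. Then d_Hell(μ₁, μ₂)² ≤ (1/(4C₁)) ∫_X (Φ₁ − Φ₂)² dμ₀ + C₂ (C₁^{−1/2} − C₂^{−1/2})². -/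
open MeasureTheory Real

/-! With `E = e^{-Φ₁/2}`, `F = e^{-Φ₂/2}` and `kᵢ = Cᵢ^{-1/2}` the square roots of the densities
are `k₁ E` and `k₂ F`, and `k₁ E - k₂ F = k₁ (E - F) + (k₁ - k₂) F`. By `(x + y)² ≤ 2 (x² + y²)`
and since `t ↦ e^{-t}` is 1-Lipschitz on `[0, ∞)`, half the squared difference is pointwise at
most `(Φ₁ - Φ₂)² / (4 C₁) + (k₁ - k₂)² e^{-Φ₂}`; integrate, using `∫ e^{-Φ₂} dμ₀ = C₂`. -/

theorem MeasureTheory.ofReal_integral_le_lintegral_ofReal {α : Type*} [MeasurableSpace α]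
    {μ : Measure α} (f : α → ℝ) : ENNReal.ofReal (∫ x, f x ∂μ) ≤ ∫⁻ x, ENNReal.ofReal (f x) ∂μ := by
  by_cases hf : Integrable f μ
  · calc ENNReal.ofReal (∫ x, f x ∂μ) ≤ ENNReal.ofReal (∫ x, max (f x) 0 ∂μ) :=
          ENNReal.ofReal_le_ofReal (integral_mono hf hf.pos_part fun x => le_max_left _ _)
      _ = ∫⁻ x, ENNReal.ofReal (f x) ∂μ := by
          rw [ofReal_integral_eq_lintegral_ofReal hf.pos_part
            (ae_of_all _ fun x => le_max_right _ _)]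
          simp only [ENNReal.ofReal_max, ENNReal.ofReal_zero, zero_le, sup_of_le_left]
  · simp [integral_undef hf]

theorem Real.abs_exp_neg_sub_exp_neg_le {u v : ℝ} (hu : 0 ≤ u) (hv : 0 ≤ v) :
    |exp (-u) - exp (-v)| ≤ |u - v| := by
  wlog huv : u ≤ v generalizing u v
  · rw [abs_sub_comm, abs_sub_comm u]; exact this hv hu (le_of_not_ge huv)
  have hexp : exp (-v) = exp (-u) * exp (-(v - u)) := by rw [← exp_add]; ring_nf
  have hle : exp (-v) ≤ exp (-u) := exp_le_exp.mpr (by linarith)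
  have hu1 : exp (-u) ≤ 1 := exp_le_one_iff.mpr (by linarith)
  have hgap : 1 - exp (-(v - u)) ≤ v - u := by linarith [add_one_le_exp (-(v - u))]
  rw [abs_of_nonneg (sub_nonneg.mpr hle), abs_of_nonpos (by linarith), neg_sub, hexp]
  calc exp (-u) - exp (-u) * exp (-(v - u)) = exp (-u) * (1 - exp (-(v - u))) := by ring
    _ ≤ 1 * (v - u) :=
        mul_le_mul hu1 hgap (sub_nonneg.mpr (exp_le_one_iff.mpr (by linarith))) zero_le_one
    _ = v - u := one_mul _

theorem Real.sqrt_exp_neg_div (a : ℝ) {C : ℝ} (hC : 0 ≤ C) :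
    √(exp (-a) / C) = C ^ (-(1 : ℝ) / 2) * exp (-a / 2) := by
  rw [sqrt_div' _ hC, ← exp_half, sqrt_eq_rpow, div_eq_inv_mul, ← rpow_neg hC, neg_div, neg_div]

theorem half_sq_sqrt_exp_neg_div_sub_le {a b C₁ C₂ : ℝ} (ha : 0 ≤ a) (hb : 0 ≤ b)
    (hC₁ : 0 ≤ C₁) (hC₂ : 0 ≤ C₂) :
    1 / 2 * (√(exp (-a) / C₁) - √(exp (-b) / C₂)) ^ 2 ≤
      1 / (4 * C₁) * (a - b) ^ 2 +
        (C₁ ^ (-(1 : ℝ) / 2) - C₂ ^ (-(1 : ℝ) / 2)) ^ 2 * exp (-b) := by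
  set k₁ := C₁ ^ (-(1 : ℝ) / 2)
  set k₂ := C₂ ^ (-(1 : ℝ) / 2)
  set E := exp (-a / 2)
  set F := exp (-b / 2)
  have hk₁ : k₁ ^ 2 = 1 / C₁ := by
    rw [← rpow_natCast, ← rpow_mul hC₁, one_div, ← rpow_neg_one]; norm_num
  have hF : F ^ 2 = exp (-b) := by rw [sq, ← exp_add]; ring_nf
  have hsplit : 1 / 2 * (k₁ * E - k₂ * F) ^ 2 ≤ k₁ ^ 2 * (E - F) ^ 2 + (k₁ - k₂) ^ 2 * F ^ 2 := by
    have := add_sq_le (a := k₁ * (E - F)) (b := (k₁ - k₂) * F)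
    ring_nf at this ⊢; linarith
  have hEF : (E - F) ^ 2 ≤ ((a - b) / 2) ^ 2 := by
    rw [sub_div, sq_le_sq]
    simpa only [E, F, neg_div] using
      abs_exp_neg_sub_exp_neg_le (u := a / 2) (v := b / 2) (by positivity) (by positivity)
  rw [sqrt_exp_neg_div a hC₁, sqrt_exp_neg_div b hC₂, ← hF]
  calc 1 / 2 * (k₁ * E - k₂ * F) ^ 2 ≤ k₁ ^ 2 * (E - F) ^ 2 + (k₁ - k₂) ^ 2 * F ^ 2 := hsplit
    _ ≤ k₁ ^ 2 * ((a - b) / 2) ^ 2 + (k₁ - k₂) ^ 2 * F ^ 2 := by gcongr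
    _ = 1 / (4 * C₁) * (a - b) ^ 2 + (k₁ - k₂) ^ 2 * F ^ 2 := by rw [hk₁]; ring

theorem hellingerDist_sq {X : Type*} [MeasurableSpace X] (μ₀ : Measure X) (f g : X → ℝ) :
    hellingerDist μ₀ f g ^ 2 = ∫ x, 1 / 2 * (√(f x) - √(g x)) ^ 2 ∂μ₀ := by
  rw [hellingerDist, sq_sqrt (by positivity), integral_const_mul]

theorem hellinger_sq_le_misfit_bound_general
    {X : Type*} [MeasurableSpace X] (μ₀ : Measure X)
    (Φ₁ Φ₂ : X → ℝ)
    (h₁0 : ∀ x, 0 ≤ Φ₁ x) (h₂0 : ∀ x, 0 ≤ Φ₂ x)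
    (C₁ C₂ : ℝ)
    (hC₁pos : 0 < C₁)
    (hC₂ : C₂ = ∫ x, Real.exp (-Φ₂ x) ∂μ₀) (hC₂pos : 0 < C₂) :
    ENNReal.ofReal
        ((hellingerDist μ₀ (fun x => Real.exp (-Φ₁ x) / C₁)
            (fun x => Real.exp (-Φ₂ x) / C₂)) ^ 2) ≤
      ENNReal.ofReal (1 / (4 * C₁)) *
          (∫⁻ x, ENNReal.ofReal ((Φ₁ x - Φ₂ x) ^ 2) ∂μ₀) +
        ENNReal.ofReal (C₂ * (C₁ ^ (-(1 : ℝ) / 2) - C₂ ^ (-(1 : ℝ) / 2)) ^ 2) := by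
  set K := (C₁ ^ (-(1 : ℝ) / 2) - C₂ ^ (-(1 : ℝ) / 2)) ^ 2
  have hint₂ : Integrable (fun x => exp (-Φ₂ x)) μ₀ := .of_integral_ne_zero (hC₂ ▸ hC₂pos.ne')
  have hpointwise (x : X) := half_sq_sqrt_exp_neg_div_sub_le (h₁0 x) (h₂0 x) hC₁pos.le hC₂pos.le
  rw [hellingerDist_sq]
  calc _ ≤ ∫⁻ x, ENNReal.ofReal (1 / 2 * (√(exp (-Φ₁ x) / C₁) - √(exp (-Φ₂ x) / C₂)) ^ 2) ∂μ₀ :=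
        ofReal_integral_le_lintegral_ofReal _
    _ ≤ ∫⁻ x, ENNReal.ofReal (1 / (4 * C₁)) * ENNReal.ofReal ((Φ₁ x - Φ₂ x) ^ 2) +
          ENNReal.ofReal K * ENNReal.ofReal (exp (-Φ₂ x)) ∂μ₀ := by
        refine lintegral_mono fun x => (ENNReal.ofReal_le_ofReal (hpointwise x)).trans ?_
        rw [ENNReal.ofReal_add (by positivity) (by positivity), ENNReal.ofReal_mul (by positivity),
          ENNReal.ofReal_mul (by positivity)]
    _ = _ := by
        rw [lintegral_add_right' _ (hint₂.aemeasurable.ennreal_ofReal.const_mul _),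
          lintegral_const_mul' _ _ ENNReal.ofReal_ne_top,
          lintegral_const_mul' _ _ ENNReal.ofReal_ne_top,
          ← ofReal_integral_eq_lintegral_ofReal hint₂ (ae_of_all _ fun x => (exp_pos _).le), ← hC₂,
          ← ENNReal.ofReal_mul (by positivity), mul_comm K]

/-- Core estimate of the well-posedness theorem: for Gibbs-type measures `μᵢ` with
densities `e^{−Φᵢ}/Cᵢ` with respect to a probability measure `μ₀`,
`d_Hell(μ₁, μ₂)² ≤ (1/(4C₁)) ∫ (Φ₁ − Φ₂)² dμ₀ + C₂ (C₁^{−1/2} − C₂^{−1/2})²`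
(the integral on the right possibly infinite). -/
theorem hellinger_sq_le_misfit_bound
    {X : Type*} [MeasurableSpace X] (μ₀ : Measure X) [IsProbabilityMeasure μ₀]
    (Φ₁ Φ₂ : X → ℝ) (h₁ : Measurable Φ₁) (h₂ : Measurable Φ₂)
    (h₁0 : ∀ x, 0 ≤ Φ₁ x) (h₂0 : ∀ x, 0 ≤ Φ₂ x)
    (C₁ C₂ : ℝ)
    (hC₁ : C₁ = ∫ x, Real.exp (-Φ₁ x) ∂μ₀) (hC₁pos : 0 < C₁)
    (hC₂ : C₂ = ∫ x, Real.exp (-Φ₂ x) ∂μ₀) (hC₂pos : 0 < C₂)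
    (μ₁ μ₂ : Measure X)
    (hμ₁ : μ₁ = μ₀.withDensity fun x => ENNReal.ofReal (Real.exp (-Φ₁ x) / C₁))
    (hμ₂ : μ₂ = μ₀.withDensity fun x => ENNReal.ofReal (Real.exp (-Φ₂ x) / C₂)) :
    ENNReal.ofReal
        ((hellingerDist μ₀ (fun x => Real.exp (-Φ₁ x) / C₁)
            (fun x => Real.exp (-Φ₂ x) / C₂)) ^ 2) ≤
      ENNReal.ofReal (1 / (4 * C₁)) *
          (∫⁻ x, ENNReal.ofReal ((Φ₁ x - Φ₂ x) ^ 2) ∂μ₀) +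
        ENNReal.ofReal (C₂ * (C₁ ^ (-(1 : ℝ) / 2) - C₂ ^ (-(1 : ℝ) / 2)) ^ 2) :=
  hellinger_sq_le_misfit_bound_general μ₀ Φ₁ Φ₂ h₁0 h₂0 C₁ C₂ hC₁pos hC₂ hC₂pos
end

section
/- Let N ≥ 1, m ∈ ℝ^N, σ > 0 and β ∈ [0, 1]. Let μ be the Gaussian measure on ℝ^N given by the product ⊗_{n=1}^N N(m_n, σ) and ν the Gaussian measure ⊗_{n=1}^N N(0, σ). Then the pushforward of the product measure μ ⊗ ν on ℝ^N × ℝ^N under the preconditioned Crank–Nicolson (pCN) map T(Z, ω) = m + (1 − β²)^{1/2} (Z − m) + β ω equals μ. In other words, if Z ∼ N(m, σI) and ω ∼ N(0, σI) are independent, then the pCN proposal m + (1 − β²)^{1/2}(Z − m) + βω is again distributed as N(m, σI). -/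
open MeasureTheory ProbabilityTheory
open scoped NNReal

/-!
Regrouping the pair of vectors coordinatewise turns the product of the two product measures into
a product over `n` of the planar measures `N(m_n, σ) ⊗ N(0, σ)`, and the pCN map acts on each
factor separately. In one dimension, `c + s (Z - c) + β ω` is a shift of the sum of the
independent Gaussians `s Z` and `β ω`, whose variances add up to `(s² + β²) σ = σ`.
-/

namespace ProbabilityTheory

lemma gaussianReal_prod_gaussianReal_map_linear (a b μ₁ μ₂ : ℝ) (v₁ v₂ : ℝ≥0) :
    ((gaussianReal μ₁ v₁).prod (gaussianReal μ₂ v₂)).map (fun p : ℝ × ℝ ↦ a * p.1 + b * p.2) =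
      gaussianReal (a * μ₁ + b * μ₂)
        (.mk (a ^ 2) (sq_nonneg a) * v₁ + .mk (b ^ 2) (sq_nonneg b) * v₂) := by
  have h : (fun p : ℝ × ℝ ↦ a * p.1 + b * p.2) =
      (fun p : ℝ × ℝ ↦ p.1 + p.2) ∘ Prod.map (a * ·) (b * ·) := rfl
  rw [h, ← Measure.map_map (by fun_prop) (by fun_prop),
    ← Measure.map_prod_map _ _ (by fun_prop) (by fun_prop),
    gaussianReal_map_const_mul, gaussianReal_map_const_mul]
  exact gaussianReal_conv_gaussianReal

lemma gaussianReal_prod_gaussianReal_map_pCN {s β : ℝ} (h : s ^ 2 + β ^ 2 = 1) (c : ℝ) (v : ℝ≥0) :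
    ((gaussianReal c v).prod (gaussianReal 0 v)).map
        (fun p : ℝ × ℝ ↦ c + s * (p.1 - c) + β * p.2) = gaussianReal c v := by
  have hT : (fun p : ℝ × ℝ ↦ c + s * (p.1 - c) + β * p.2) =
      (fun x ↦ x + (c - s * c)) ∘ fun p : ℝ × ℝ ↦ s * p.1 + β * p.2 := by
    funext p; simp only [Function.comp_apply]; ring
  rw [hT, ← Measure.map_map (by fun_prop) (by fun_prop),
    gaussianReal_prod_gaussianReal_map_linear, gaussianReal_map_add_const]
  congr 1
  · ring
  · ext
    simp only [NNReal.coe_add, NNReal.coe_mul, NNReal.coe_mk]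
    linear_combination (v : ℝ) * h

end ProbabilityTheory

theorem pCN_preserves_gaussian_prior_general
    (N : ℕ) (m : Fin N → ℝ) (σ : ℝ≥0)
    (β : ℝ) (hβ : β ∈ Set.Icc (0 : ℝ) 1) :
    Measure.map
        (fun p : (Fin N → ℝ) × (Fin N → ℝ) =>
          fun n => m n + Real.sqrt (1 - β ^ 2) * (p.1 n - m n) + β * p.2 n)
        ((Measure.pi fun n => gaussianReal (m n) σ).prod
          (Measure.pi fun _ => gaussianReal 0 σ)) =
      Measure.pi fun n => gaussianReal (m n) σ := by
  have hs : Real.sqrt (1 - β ^ 2) ^ 2 + β ^ 2 = 1 := by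
    rw [Real.sq_sqrt (by nlinarith [hβ.1, hβ.2])]
    ring
  rw [← (measurePreserving_arrowProdEquivProdArrow ℝ ℝ (Fin N) _ _).map_eq,
    Measure.map_map (by fun_prop) (MeasurableEquiv.measurable _)]
  refine (Measure.pi_map_pi (f := fun n (p : ℝ × ℝ) ↦
      m n + Real.sqrt (1 - β ^ 2) * (p.1 - m n) + β * p.2) fun _ ↦ by fun_prop).trans ?_
  exact congrArg Measure.pi (funext fun n ↦ gaussianReal_prod_gaussianReal_map_pCN hs (m n) σ)

/-- Invariance of the Gaussian prior `N(m, σI)` under the preconditioned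
Crank–Nicolson proposal: if `Z ∼ N(m, σI)` and `ω ∼ N(0, σI)` are independent, then
`m + (1 − β²)^{1/2}(Z − m) + βω ∼ N(m, σI)`. -/
theorem pCN_preserves_gaussian_prior
    (N : ℕ) (hN : 1 ≤ N) (m : Fin N → ℝ) (σ : ℝ≥0) (hσ : 0 < σ)
    (β : ℝ) (hβ : β ∈ Set.Icc (0 : ℝ) 1) :
    Measure.map
        (fun p : (Fin N → ℝ) × (Fin N → ℝ) =>
          fun n => m n + Real.sqrt (1 - β ^ 2) * (p.1 n - m n) + β * p.2 n)
        ((Measure.pi fun n => gaussianReal (m n) σ).prod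
          (Measure.pi fun _ => gaussianReal 0 σ)) =
      Measure.pi fun n => gaussianReal (m n) σ :=
  pCN_preserves_gaussian_prior_general N m σ β hβ
end
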